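/- Let f : {0,1}^n → {0,1} be a monotone Boolean function nondeterministically computed by a circuit C with only ¬- and ∧-gates, and let T_f, q_f, A_α, Σ_f be the associated construction, where Σ_f has the single constant a. Suppose q' is a first-order sentence over Σ_f such that, for every α ∈ {0,1}^n, (T_f, A_α) ⊨ q_f iff I_{A_α} ⊨ q'. Then the sentence q'' = ∃x [A₀(x) ∧ (q' ∨ ⋁_{B} B(x))], where B ranges over the basic concepts of Σ_f with A₀ ⊓ B ⊑_{T_f} ⊥ and B(x) abbreviates ∃y P(x,y) when B = ∃P or ∃y P(y,x) when B = ∃P⁻, is an FO-rewriting for q_f and T_f over Σ_f, and there is an absolute constant c with |q''| ≤ |q'| + c·|C|². -/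

import Mathlib

namespace QRew

/-! ### Boolean circuits.
A Boolean circuit with inputs indexed by `ι`, advice inputs indexed by `κ` and
gates `0, …, ℓ-1` (in topological order: each gate only uses earlier gates),
with a designated output gate.  Gates are labelled `¬` (one incoming edge),
`∧`/`∨` (two incoming edges) or are Boolean constants. -/

inductive Wire (ι κ : Type) (ℓ : ℕ) : Type
  | input : ι → Wire ι κ ℓ
  | advice : κ → Wire ι κ ℓ
  | gate : Fin ℓ → Wire ι κ ℓ
  deriving DecidableEq

inductive GateDef (ι κ : Type) (ℓ : ℕ) : Type
  | tru : GateDef ι κ ℓ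
  | fls : GateDef ι κ ℓ
  | not : Wire ι κ ℓ → GateDef ι κ ℓ
  | and : Wire ι κ ℓ → Wire ι κ ℓ → GateDef ι κ ℓ
  | or : Wire ι κ ℓ → Wire ι κ ℓ → GateDef ι κ ℓ

def Wire.gateBound {ι κ : Type} {ℓ : ℕ} : Wire ι κ ℓ → ℕ
  | .gate g => g.val + 1
  | _ => 0

def GateDef.wires {ι κ : Type} {ℓ : ℕ} : GateDef ι κ ℓ → List (Wire ι κ ℓ)
  | .tru => []
  | .fls => []
  | .not w => [w]
  | .and w w' => [w, w']
  | .or w w' => [w, w']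

structure Circuit (ι κ : Type) (ℓ : ℕ) where
  gate : Fin ℓ → GateDef ι κ ℓ
  out : Fin ℓ
  topo : ∀ i : Fin ℓ, ∀ w ∈ (gate i).wires, w.gateBound ≤ i.val

def Wire.evalWith {ι κ : Type} {ℓ : ℕ} (x : ι → Bool) (y : κ → Bool)
    (v : Fin ℓ → Bool) : Wire ι κ ℓ → Bool
  | .input i => x i
  | .advice j => y j
  | .gate g => v g

def GateDef.evalWith {ι κ : Type} {ℓ : ℕ} (x : ι → Bool) (y : κ → Bool)
    (v : Fin ℓ → Bool) : GateDef ι κ ℓ → Bool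
  | .tru => true
  | .fls => false
  | .not w => ! w.evalWith x y v
  | .and w w' => w.evalWith x y v && w'.evalWith x y v
  | .or w w' => w.evalWith x y v || w'.evalWith x y v

/-- The values of the gates of the circuit, computed in `k` rounds of
evaluation (by the topological-order condition, after `ℓ` rounds every gate
has its correct value). -/
def Circuit.gateVals {ι κ : Type} {ℓ : ℕ} (C : Circuit ι κ ℓ)
    (x : ι → Bool) (y : κ → Bool) : ℕ → Fin ℓ → Bool
  | 0 => fun _ => false
  | (k + 1) => fun g => (C.gate g).evalWith x y (C.gateVals x y k)

/-- The output of gate `g` of the circuit on input `(x, y)`. -/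
def Circuit.gateVal {ι κ : Type} {ℓ : ℕ} (C : Circuit ι κ ℓ)
    (x : ι → Bool) (y : κ → Bool) (g : Fin ℓ) : Bool :=
  C.gateVals x y ℓ g

/-- The output of the circuit on input `(x, y)`. -/
def Circuit.eval {ι κ : Type} {ℓ : ℕ} (C : Circuit ι κ ℓ)
    (x : ι → Bool) (y : κ → Bool) : Bool :=
  C.gateVal x y C.out

/-- The size of a circuit: its number of nodes (inputs, advice inputs and gates). -/
noncomputable def Circuit.size {ι κ : Type} {ℓ : ℕ} (_ : Circuit ι κ ℓ) : ℕ :=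
  Nat.card ι + Nat.card κ + ℓ

/-- A monotone circuit: one with no `¬`-gates. -/
def Circuit.MonotoneC {ι κ : Type} {ℓ : ℕ} (C : Circuit ι κ ℓ) : Prop :=
  ∀ (g : Fin ℓ) (w : Wire ι κ ℓ), C.gate g ≠ .not w

/-- A circuit using only `¬`- and `∧`-gates. -/
def Circuit.OnlyNotAnd {ι κ : Type} {ℓ : ℕ} (C : Circuit ι κ ℓ) : Prop :=
  ∀ g : Fin ℓ, (∃ w, C.gate g = .not w) ∨ (∃ w w', C.gate g = .and w w')

/-- `C` nondeterministically computes `f` : for every input `a`,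
`f a = 1` iff `C(a, b) = 1` for some advice `b`. -/
def NondetComputes {ι κ : Type} {ℓ : ℕ} (C : Circuit ι κ ℓ)
    (f : (ι → Bool) → Bool) : Prop :=
  ∀ a : ι → Bool, (f a = true ↔ ∃ b : κ → Bool, C.eval a b = true)

/-- A monotone Boolean function. -/
def MonotoneFun {ι : Type} (f : (ι → Bool) → Bool) : Prop :=
  ∀ a b : ι → Bool, (∀ i, a i = true → b i = true) → f a = true → f b = true

/-! ### Boolean formulas -/

inductive BForm (V : Type) : Type
  | var : V → BForm V
  | tru : BForm V
  | fls : BForm V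
  | not : BForm V → BForm V
  | and : BForm V → BForm V → BForm V
  | or : BForm V → BForm V → BForm V

def BForm.eval {V : Type} (v : V → Bool) : BForm V → Bool
  | .var x => v x
  | .tru => true
  | .fls => false
  | .not φ => ! φ.eval v
  | .and φ ψ => φ.eval v && ψ.eval v
  | .or φ ψ => φ.eval v || ψ.eval v

/-- Truth of a Boolean formula under a `Prop`-valued assignment of the variables. -/
def BForm.holds {V : Type} (v : V → Prop) : BForm V → Prop
  | .var x => v x
  | .tru => True
  | .fls => False
  | .not φ => ¬ φ.holds v
  | .and φ ψ => φ.holds v ∧ ψ.holds v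
  | .or φ ψ => φ.holds v ∨ ψ.holds v

/-- A monotone Boolean formula: no `¬`. -/
def BForm.MonotoneF {V : Type} : BForm V → Prop
  | .var _ => True
  | .tru => True
  | .fls => True
  | .not _ => False
  | .and φ ψ => φ.MonotoneF ∧ ψ.MonotoneF
  | .or φ ψ => φ.MonotoneF ∧ ψ.MonotoneF

def BForm.size {V : Type} : BForm V → ℕ
  | .var _ => 1
  | .tru => 1
  | .fls => 1
  | .not φ => 1 + φ.size
  | .and φ ψ => 1 + φ.size + ψ.size
  | .or φ ψ => 1 + φ.size + ψ.size

def BForm.Computes {V : Type} (φ : BForm V) (f : (V → Bool) → Bool) : Prop :=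
  ∀ v : V → Bool, φ.eval v = f v

end QRew
namespace QRew

/-! ### The Tseitin-style CNF `φ_α` of a circuit.

For a circuit `C` with inputs `x₁,…,x_n`, advice inputs `y₁,…,y_p` and gates
`g₁,…,g_ℓ` (using only `¬`- and `∧`-gates), the CNF `φ_α` has the variables
`x, y, g` (represented by `Wire (Fin n) (Fin p) ℓ`) and the clauses
  * `¬x_j` for each `j` with `α_j = 0`;
  * the unit clause `g_out` (the output gate);
  * for each gate `g_i = ¬h_i` the clauses `(h_i ∨ ¬g_i)` and `(¬h_i ∨ g_i)`;
  * for each gate `g_i = h_i ∧ h_i'` the clauses `(h_i ∨ ¬g_i)`,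
    `(h_i' ∨ ¬g_i)` and `(¬h_i ∨ ¬h_i' ∨ g_i)`.
Clause indices: `.neg j` is the clause `¬x_j`; `.out` is the clause `g_out`;
`.g i k` (`k < 3`) are the (at most three) clauses attached to gate `i`. -/

inductive ClIdx (n ℓ : ℕ) : Type
  | neg : Fin n → ClIdx n ℓ
  | out : ClIdx n ℓ
  | g : Fin ℓ → Fin 3 → ClIdx n ℓ

/-- The positive literals of a clause of `φ_α`. -/
def clPos {n p ℓ : ℕ} (C : Circuit (Fin n) (Fin p) ℓ) :
    ClIdx n ℓ → List (Wire (Fin n) (Fin p) ℓ)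
  | .neg _ => []
  | .out => [.gate C.out]
  | .g i k =>
    match C.gate i with
    | .tru => [.gate i]
    | .fls => []
    | .not h => if k.val = 1 then [.gate i] else [h]
    | .and h h' => if k.val = 0 then [h] else if k.val = 1 then [h'] else [.gate i]
    | .or h h' => if k.val = 2 then [h, h'] else [.gate i]

/-- The negative literals of a clause of `φ_α`. -/
def clNeg {n p ℓ : ℕ} (C : Circuit (Fin n) (Fin p) ℓ) :
    ClIdx n ℓ → List (Wire (Fin n) (Fin p) ℓ)
  | .neg j => [.input j]
  | .out => []
  | .g i k =>
    match C.gate i with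
    | .tru => []
    | .fls => [.gate i]
    | .not h => if k.val = 1 then [h] else [.gate i]
    | .and h h' => if k.val = 2 then [h, h'] else [.gate i]
    | .or h h' => if k.val = 2 then [.gate i] else if k.val = 0 then [h] else [h']

/-- Satisfaction of a clause of `φ_α` under an assignment `(a, b, c)` to the
variables `(x, y, g)`. -/
def ClauseSat {n p ℓ : ℕ} (C : Circuit (Fin n) (Fin p) ℓ)
    (a : Fin n → Bool) (b : Fin p → Bool) (c : Fin ℓ → Bool) (j : ClIdx n ℓ) : Prop :=
  (∃ w ∈ clPos C j, w.evalWith a b c = true) ∨ (∃ w ∈ clNeg C j, w.evalWith a b c = false)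

/-- The clauses of `φ_α`: all of them except that the clause `¬x_j` is present
only when `α_j = 0`. -/
def ActiveCl {n ℓ : ℕ} (α : Fin n → Bool) : ClIdx n ℓ → Prop
  | .neg j => α j = false
  | _ => True

/-- Satisfiability of the CNF `φ_α`. -/
def PhiSat {n p ℓ : ℕ} (C : Circuit (Fin n) (Fin p) ℓ) (α : Fin n → Bool) : Prop :=
  ∃ (a : Fin n → Bool) (b : Fin p → Bool) (c : Fin ℓ → Bool),
    ∀ j : ClIdx n ℓ, ActiveCl α j → ClauseSat C a b c j

end QRew
namespace QRew

/-! ### OWL 2 QL: syntax and semantics.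

A signature consists of individual constants (a type `K`), concept names
(a type `CN`) and role names (a type `RN`). -/

/-- Roles: role names and their inverses. -/
inductive Role (RN : Type) : Type
  | pos : RN → Role RN
  | inv : RN → Role RN

/-- Basic concepts: `⊥`, concept names, `∃R`. -/
inductive BCon (CN RN : Type) : Type
  | bot : BCon CN RN
  | atom : CN → BCon CN RN
  | exr : Role RN → BCon CN RN

/-- Concepts: basic concepts and `∃R.B`. -/
inductive Con (CN RN : Type) : Type
  | bc : BCon CN RN → Con CN RN
  | exrb : Role RN → BCon CN RN → Con CN RN

/-- OWL 2 QL TBox axioms: `B ⊑ C`, `R₁ ⊑ R₂`, `B₁ ⊓ B₂ ⊑ ⊥`, `R₁ ⊓ R₂ ⊑ ⊥`. -/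
inductive Ax (CN RN : Type) : Type
  | sub : BCon CN RN → Con CN RN → Ax CN RN
  | rsub : Role RN → Role RN → Ax CN RN
  | disj : BCon CN RN → BCon CN RN → Ax CN RN
  | rdisj : Role RN → Role RN → Ax CN RN

/-- A first-order interpretation of the signature `(K, CN, RN)`,
with a nonempty domain. -/
structure Interp (K CN RN : Type) where
  Dom : Type
  ne : Nonempty Dom
  ind : K → Dom
  conc : CN → Dom → Prop
  role : RN → Dom → Dom → Prop

def Role.sem {K CN RN : Type} (I : Interp K CN RN) : Role RN → I.Dom → I.Dom → Prop
  | .pos P => I.role P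
  | .inv P => fun u v => I.role P v u

def BCon.sem {K CN RN : Type} (I : Interp K CN RN) : BCon CN RN → I.Dom → Prop
  | .bot => fun _ => False
  | .atom A => I.conc A
  | .exr R => fun u => ∃ v, R.sem I u v

def Con.sem {K CN RN : Type} (I : Interp K CN RN) : Con CN RN → I.Dom → Prop
  | .bc B => B.sem I
  | .exrb R B => fun u => ∃ v, R.sem I u v ∧ B.sem I v

def Ax.sem {K CN RN : Type} (I : Interp K CN RN) : Ax CN RN → Prop
  | .sub B c => ∀ u, B.sem I u → c.sem I u
  | .rsub R R' => ∀ u v, R.sem I u v → R'.sem I u v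
  | .disj B B' => ∀ u, B.sem I u → B'.sem I u → False
  | .rdisj R R' => ∀ u v, R.sem I u v → R'.sem I u v → False

/-- Ground atoms (ABox assertions). -/
inductive GAtom (K CN RN : Type) : Type
  | conc : CN → K → GAtom K CN RN
  | role : RN → K → K → GAtom K CN RN

def GAtom.sem {K CN RN : Type} (I : Interp K CN RN) : GAtom K CN RN → Prop
  | .conc A a => I.conc A (I.ind a)
  | .role P a b => I.role P (I.ind a) (I.ind b)

/-- An ABox: a finite set (list) of ground atoms. -/
abbrev ABox (K CN RN : Type) := List (GAtom K CN RN)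

/-- First-order terms over the constants `K`. -/
inductive Term (K : Type) : Type
  | var : ℕ → Term K
  | const : K → Term K
  deriving DecidableEq

def Term.sem {K CN RN : Type} (I : Interp K CN RN) (v : ℕ → I.Dom) : Term K → I.Dom
  | .var x => v x
  | .const a => I.ind a

/-- Atoms of conjunctive queries. -/
inductive CQAtom (K CN RN : Type) : Type
  | conc : CN → Term K → CQAtom K CN RN
  | role : RN → Term K → Term K → CQAtom K CN RN

def CQAtom.sem {K CN RN : Type} (I : Interp K CN RN) (v : ℕ → I.Dom) :
    CQAtom K CN RN → Prop
  | .conc A t => I.conc A (t.sem I v)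
  | .role P t t' => I.role P (t.sem I v) (t'.sem I v)

/-- A Boolean conjunctive query: a list of atoms, all of whose variables are
(implicitly) existentially quantified. -/
abbrev CQ (K CN RN : Type) := List (CQAtom K CN RN)

def CQ.sem {K CN RN : Type} (I : Interp K CN RN) (q : CQ K CN RN) : Prop :=
  have := I.ne
  ∃ v : ℕ → I.Dom, ∀ a ∈ q, a.sem I v

/-- Certain answer to a Boolean CQ: `(T, A) ⊨ q` iff `q` holds in every
first-order model of `T ∪ A`. -/
def Entails {K CN RN : Type} (T : List (Ax CN RN)) (A : ABox K CN RN)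
    (q : CQ K CN RN) : Prop :=
  ∀ I : Interp K CN RN, (∀ ax ∈ T, ax.sem I) → (∀ g ∈ A, g.sem I) → CQ.sem I q

/-- The interpretation `I_A` of an ABox `A`: its domain consists of all the
constants of the signature and a ground atom holds in it iff it belongs to `A`. -/
def IA {K CN RN : Type} [hK : Nonempty K] (A : ABox K CN RN) : Interp K CN RN where
  Dom := K
  ne := hK
  ind := id
  conc := fun c a => GAtom.conc c a ∈ A
  role := fun P a b => GAtom.role P a b ∈ A

/-! ### First-order formulas over a signature (no built-in predicates,
in particular no equality). -/

inductive FO (K CN RN : Type) : Type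
  | conc : CN → Term K → FO K CN RN
  | role : RN → Term K → Term K → FO K CN RN
  | and : FO K CN RN → FO K CN RN → FO K CN RN
  | or : FO K CN RN → FO K CN RN → FO K CN RN
  | not : FO K CN RN → FO K CN RN
  | ex : ℕ → FO K CN RN → FO K CN RN
  | all : ℕ → FO K CN RN → FO K CN RN

def FO.sem {K CN RN : Type} (I : Interp K CN RN) (v : ℕ → I.Dom) : FO K CN RN → Prop
  | .conc A t => I.conc A (t.sem I v)
  | .role P t t' => I.role P (t.sem I v) (t'.sem I v)
  | .and φ ψ => φ.sem I v ∧ ψ.sem I v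
  | .or φ ψ => φ.sem I v ∨ ψ.sem I v
  | .not φ => ¬ φ.sem I v
  | .ex x φ => ∃ u : I.Dom, φ.sem I (Function.update v x u)
  | .all x φ => ∀ u : I.Dom, φ.sem I (Function.update v x u)

/-- Truth of a formula in an interpretation (for sentences this is the usual
notion of truth; free variables are read universally). -/
def FO.holds {K CN RN : Type} (I : Interp K CN RN) (φ : FO K CN RN) : Prop :=
  ∀ v : ℕ → I.Dom, φ.sem I v

def Term.fv {K : Type} : Term K → Set ℕ
  | .var x => {x}
  | .const _ => ∅

/-- Free variables of a first-order formula. -/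
def FO.free {K CN RN : Type} : FO K CN RN → Set ℕ
  | .conc _ t => t.fv
  | .role _ t t' => t.fv ∪ t'.fv
  | .and φ ψ => φ.free ∪ ψ.free
  | .or φ ψ => φ.free ∪ ψ.free
  | .not φ => φ.free
  | .ex x φ => φ.free \ {x}
  | .all x φ => φ.free \ {x}

/-- Positive existential formulas: built from atoms using only `∧`, `∨`, `∃`. -/
def FO.IsPE {K CN RN : Type} : FO K CN RN → Prop
  | .conc _ _ => True
  | .role _ _ _ => True
  | .and φ ψ => φ.IsPE ∧ ψ.IsPE
  | .or φ ψ => φ.IsPE ∧ ψ.IsPE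
  | .not _ => False
  | .ex _ φ => φ.IsPE
  | .all _ _ => False

/-- The size (number of symbols) of a first-order formula. -/
def FO.size {K CN RN : Type} : FO K CN RN → ℕ
  | .conc _ _ => 2
  | .role _ _ _ => 3
  | .and φ ψ => 3 + φ.size + ψ.size
  | .or φ ψ => 3 + φ.size + ψ.size
  | .not φ => 1 + φ.size
  | .ex _ φ => 2 + φ.size
  | .all _ φ => 2 + φ.size

/-- `q'` is an FO-rewriting for the Boolean CQ `q` and the TBox `T` over the
signature `(K, CN, RN)`: for every ABox `A` over the signature,
`(T, A) ⊨ q` iff `I_A ⊨ q'`. -/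
def IsFORewriting {K CN RN : Type} [Nonempty K] (T : List (Ax CN RN))
    (q : CQ K CN RN) (q' : FO K CN RN) : Prop :=
  ∀ A : ABox K CN RN, Entails T A q ↔ FO.holds (IA A) q'

/-- A positive existential (PE-) rewriting. -/
def IsPERewriting {K CN RN : Type} [Nonempty K] (T : List (Ax CN RN))
    (q : CQ K CN RN) (q' : FO K CN RN) : Prop :=
  IsFORewriting T q q' ∧ q'.IsPE

/-! Sizes of TBoxes and queries (numbers of symbols). -/

def BCon.size {CN RN : Type} : BCon CN RN → ℕ
  | .bot => 1
  | .atom _ => 1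
  | .exr _ => 2

def Con.size {CN RN : Type} : Con CN RN → ℕ
  | .bc B => B.size
  | .exrb _ B => 2 + B.size

def Ax.size {CN RN : Type} : Ax CN RN → ℕ
  | .sub B c => 1 + B.size + c.size
  | .rsub _ _ => 3
  | .disj B B' => 2 + B.size + B'.size
  | .rdisj _ _ => 4

def tbSize {CN RN : Type} (T : List (Ax CN RN)) : ℕ := (T.map Ax.size).sum

def CQAtom.size {K CN RN : Type} : CQAtom K CN RN → ℕ
  | .conc _ _ => 2
  | .role _ _ _ => 3

def cqSize {K CN RN : Type} (q : CQ K CN RN) : ℕ := (q.map CQAtom.size).sum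

/-! Maps of syntax along signature inclusions. -/

def Role.map {RN RN' : Type} (fR : RN → RN') : Role RN → Role RN'
  | .pos P => .pos (fR P)
  | .inv P => .inv (fR P)

def BCon.map {CN RN CN' RN' : Type} (fC : CN → CN') (fR : RN → RN') :
    BCon CN RN → BCon CN' RN'
  | .bot => .bot
  | .atom A => .atom (fC A)
  | .exr R => .exr (R.map fR)

def Con.map {CN RN CN' RN' : Type} (fC : CN → CN') (fR : RN → RN') :
    Con CN RN → Con CN' RN'
  | .bc B => .bc (B.map fC fR)
  | .exrb R B => .exrb (R.map fR) (B.map fC fR)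

def Ax.map {CN RN CN' RN' : Type} (fC : CN → CN') (fR : RN → RN') :
    Ax CN RN → Ax CN' RN'
  | .sub B c => .sub (B.map fC fR) (c.map fC fR)
  | .rsub R R' => .rsub (R.map fR) (R'.map fR)
  | .disj B B' => .disj (B.map fC fR) (B'.map fC fR)
  | .rdisj R R' => .rdisj (R.map fR) (R'.map fR)

def Term.map {K K' : Type} (fK : K → K') : Term K → Term K'
  | .var x => .var x
  | .const a => .const (fK a)

def CQAtom.map {K CN RN K' CN' RN' : Type} (fK : K → K') (fC : CN → CN')
    (fR : RN → RN') : CQAtom K CN RN → CQAtom K' CN' RN'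
  | .conc A t => .conc (fC A) (t.map fK)
  | .role P t t' => .role (fR P) (t.map fK) (t'.map fK)

def CQ.map {K CN RN K' CN' RN' : Type} (fK : K → K') (fC : CN → CN')
    (fR : RN → RN') (q : CQ K CN RN) : CQ K' CN' RN' :=
  List.map (CQAtom.map fK fC fR) q

instance sumNonemptyLeft {α β : Type} [Nonempty α] : Nonempty (α ⊕ β) :=
  ⟨Sum.inl (Classical.arbitrary α)⟩

end QRew
namespace QRew

/-! ### The TBox `T_f`, CQ `q_f` and ABoxes `A_α` associated with a circuit.

Given a circuit `C` with `n` inputs, `p` advice inputs and `ℓ` gates, the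
variables `p_1, …, p_N` (`N = n + p + ℓ`) of its Tseitin CNF are the inputs,
advice inputs and gates, and the clauses `C_1, …, C_d` (`d = n + 1 + 3ℓ`) of
`φ_{(0,…,0)}` are listed so that `C_j = ¬x_j` for `1 ≤ j ≤ n`, then the unit
output clause, then the gate clauses.  The signature `Σ_f` consists of a
single individual constant `a` (the type `Unit`), the concept names
`A_0, …, A_N`, `X_i^0, X_i^1` (`1 ≤ i ≤ N`), `Z_{i,j}` (`0 ≤ i ≤ N`,
`1 ≤ j ≤ d`) and a single role name `P` (the type `Unit`). -/

/-- Concept names of the signature `Σ_f`:  `A i` for `0 ≤ i ≤ N`, `X i ℓ`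
for `1 ≤ i ≤ N` (an index `i : Fin N` represents the variable `p_{i+1}`),
and `Z i j` for `0 ≤ i ≤ N`, `1 ≤ j ≤ d`. -/
inductive CName (N d : ℕ) : Type
  | A : Fin (N + 1) → CName N d
  | X : Fin N → Bool → CName N d
  | Z : Fin (N + 1) → Fin d → CName N d

/-- The `i`-th variable of the CNF (`i < N = n + p + ℓ`): first the inputs,
then the advice inputs, then the gates. -/
def wOf (n p ℓ : ℕ) (i : Fin (n + p + ℓ)) : Wire (Fin n) (Fin p) ℓ :=
  if h : i.val < n then .input ⟨i.val, h⟩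
  else if h2 : i.val < n + p then .advice ⟨i.val - n, by omega⟩
  else .gate ⟨i.val - n - p, by have hi := i.isLt; omega⟩

/-- The `j`-th clause of `φ_{(0,…,0)}` (`j < d = n + 1 + 3ℓ`): the clauses
`¬x_1, …, ¬x_n` first, then the output clause, then the gate clauses. -/
def clOf (n ℓ : ℕ) (j : Fin (n + 1 + 3 * ℓ)) : ClIdx n ℓ :=
  if h : j.val < n then .neg ⟨j.val, h⟩
  else if h2 : j.val = n then .out
  else .g ⟨(j.val - n - 1) / 3, by
        have hj := j.isLt
        exact Nat.div_lt_of_lt_mul (by omega)⟩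
      ⟨(j.val - n - 1) % 3, Nat.mod_lt _ (by norm_num)⟩

/-- The TBox `T_f` associated with the circuit `C` (over the signature `Σ_f`):
for `1 ≤ i ≤ N`, `1 ≤ j ≤ d` and `ℓ ∈ {0,1}` it contains
`A_{i-1} ⊑ ∃P⁻.X_i^ℓ`,  `X_i^ℓ ⊑ A_i`,  `X_i^0 ⊑ Z_{i,j}` if `¬p_i ∈ C_j`,
`X_i^1 ⊑ Z_{i,j}` if `p_i ∈ C_j`,  `Z_{i,j} ⊑ ∃P.Z_{i-1,j}`,
`A_0 ⊓ A_i ⊑ ⊥`,  `A_0 ⊓ ∃P ⊑ ⊥`, and `A_0 ⊓ Z_{i,j} ⊑ ⊥` for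
`(i,j) ∉ {(0,1), …, (0,n)}`. -/
def Tf {n p ℓ : ℕ} (C : Circuit (Fin n) (Fin p) ℓ) :
    List (Ax (CName (n + p + ℓ) (n + 1 + 3 * ℓ)) Unit) :=
  ((List.finRange (n + p + ℓ)).flatMap fun i =>
    [false, true].flatMap fun b =>
      [Ax.sub (.atom (.A i.castSucc)) (.exrb (.inv ()) (.atom (.X i b))),
       Ax.sub (.atom (.X i b)) (.bc (.atom (.A i.succ)))])
  ++
  ((List.finRange (n + p + ℓ)).flatMap fun i =>
    (List.finRange (n + 1 + 3 * ℓ)).flatMap fun j =>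
      (if wOf n p ℓ i ∈ clNeg C (clOf n ℓ j) then
          [Ax.sub (.atom (.X i false)) (.bc (.atom (.Z i.succ j)))] else [])
      ++
      (if wOf n p ℓ i ∈ clPos C (clOf n ℓ j) then
          [Ax.sub (.atom (.X i true)) (.bc (.atom (.Z i.succ j)))] else []))
  ++
  ((List.finRange (n + p + ℓ)).flatMap fun i =>
    (List.finRange (n + 1 + 3 * ℓ)).map fun j =>
      Ax.sub (.atom (.Z i.succ j)) (.exrb (.pos ()) (.atom (.Z i.castSucc j))))
  ++
  ((List.finRange (n + p + ℓ)).map fun i =>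
    Ax.disj (.atom (.A 0)) (.atom (.A i.succ)))
  ++
  [Ax.disj (.atom (.A 0)) (.exr (.pos ()))]
  ++
  ((List.finRange (n + p + ℓ + 1)).flatMap fun i =>
    (List.finRange (n + 1 + 3 * ℓ)).flatMap fun j =>
      if i.val = 0 ∧ j.val < n then []
      else [Ax.disj (.atom (.A 0)) (.atom (.Z i j))])

/-- The variable of the CQ `q_f` playing the role of `z_{i,j}`
(the variables `0, …, N` play the role of `y_0, …, y_N`). -/
def zV (N j i : ℕ) : ℕ := N + 1 + j * N + i

/-- The Boolean conjunctive query `q_f` :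
`∃ȳ∃z̄ [A₀(y₀) ∧ ⋀_{i=1}^N P(y_i, y_{i-1})
   ∧ ⋀_{j=1}^d (P(y_N, z_{N-1,j}) ∧ ⋀_{i=1}^{N-1} P(z_{i,j}, z_{i-1,j}) ∧ Z_{0,j}(z_{0,j}))]`. -/
def qf (n p ℓ : ℕ) : CQ Unit (CName (n + p + ℓ) (n + 1 + 3 * ℓ)) Unit :=
  [CQAtom.conc (.A 0) (.var 0)]
  ++
  ((List.finRange (n + p + ℓ)).map fun i =>
    CQAtom.role () (.var (i.val + 1)) (.var i.val))
  ++
  ((List.finRange (n + 1 + 3 * ℓ)).flatMap fun j =>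
    [CQAtom.role () (.var (n + p + ℓ)) (.var (zV (n + p + ℓ) j.val (n + p + ℓ - 1)))]
    ++
    ((List.finRange (n + p + ℓ - 1)).map fun i =>
      CQAtom.role () (.var (zV (n + p + ℓ) j.val (i.val + 1)))
        (.var (zV (n + p + ℓ) j.val i.val)))
    ++
    [CQAtom.conc (.Z 0 j) (.var (zV (n + p + ℓ) j.val 0))])

/-- The ABox `A_α = {A₀(a)} ∪ {Z_{0,j}(a) : 1 ≤ j ≤ n, α_j = 1}` over the
signature `Σ_f` (whose only individual constant is `a`). -/
def Aalpha (n p ℓ : ℕ) (α : Fin n → Bool) :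
    ABox Unit (CName (n + p + ℓ) (n + 1 + 3 * ℓ)) Unit :=
  GAtom.conc (.A 0) () ::
    ((List.finRange n).filterMap fun j =>
      if α j then some (GAtom.conc (.Z 0 ⟨j.val, by have := j.isLt; omega⟩) ()) else none)

end QRew
namespace QRew

/-- `T ⊨ A₀ ⊓ B ⊑ ⊥` : in every model of `T`, no element is in both `B0` and `B`. -/
def TDisjBot {CN RN : Type} (T : List (Ax CN RN)) (B0 B : BCon CN RN) : Prop :=
  ∀ I : Interp Unit CN RN, (∀ ax ∈ T, ax.sem I) →
    ∀ u : I.Dom, B0.sem I u → B.sem I u → False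

/-- Nontrivial basic concepts of a signature : concept names `A`, `∃P` and `∃P⁻`. -/
inductive NBC (CN RN : Type) : Type
  | atom : CN → NBC CN RN
  | expos : RN → NBC CN RN
  | exinv : RN → NBC CN RN

def NBC.toBC {CN RN : Type} : NBC CN RN → BCon CN RN
  | .atom A => .atom A
  | .expos P => .exr (.pos P)
  | .exinv P => .exr (.inv P)

/-- The first-order formula `B(x)`, where `B(x)` abbreviates `∃y P(x,y)` when
`B = ∃P` and `∃y P(y,x)` when `B = ∃P⁻`. -/
def NBC.fo {K CN RN : Type} : NBC CN RN → FO K CN RN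
  | .atom A => .conc A (.var 0)
  | .expos P => .ex 1 (.role P (.var 0) (.var 1))
  | .exinv P => .ex 1 (.role P (.var 1) (.var 0))
section Aux

open List

variable {CN RN : Type}

lemma holds_IA_iff (A : ABox Unit CN RN) (φ : FO Unit CN RN) :
    FO.holds (IA A) φ ↔ φ.sem (IA A) (fun _ => ()) :=
  ⟨fun h => h _, fun h v => by
    have hv : v = (fun _ => () : ℕ → (IA A).Dom) := funext fun _ => rfl
    rwa [hv]⟩

lemma sem_IA_val (A : ABox Unit CN RN) (φ : FO Unit CN RN)
    (v w : ℕ → (IA A).Dom) : φ.sem (IA A) v ↔ φ.sem (IA A) w := by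
  have hv : v = w := funext fun _ => rfl
  rw [hv]

lemma foldl_or_sem {K : Type} (I : Interp K CN RN) (v : ℕ → I.Dom)
    (L : List (NBC CN RN)) (φ : FO K CN RN) :
    (L.foldl (fun acc B => FO.or acc B.fo) φ).sem I v ↔
      φ.sem I v ∨ ∃ B ∈ L, (NBC.fo B).sem I v := by
  induction L generalizing φ with
  | nil => simp
  | cons B L ih =>
    simp only [List.foldl_cons, ih, List.mem_cons]
    constructor
    · rintro (⟨h | h⟩ | ⟨B', hB', h⟩)
      · exact Or.inl h
      · exact Or.inr ⟨B, Or.inl rfl, h⟩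
      · exact Or.inr ⟨B', Or.inr hB', h⟩
    · rintro (h | ⟨B', (rfl | hB'), h⟩)
      · exact Or.inl (Or.inl h)
      · exact Or.inl (Or.inr h)
      · exact Or.inr ⟨B', hB', h⟩

lemma nbc_fo_size {K : Type} (B : NBC CN RN) : (NBC.fo B : FO K CN RN).size ≤ 5 := by
  cases B <;> simp [NBC.fo, FO.size]

lemma foldl_or_size {K : Type} (L : List (NBC CN RN)) (φ : FO K CN RN) :
    (L.foldl (fun acc B => FO.or acc B.fo) φ).size ≤ φ.size + 8 * L.length := by
  induction L generalizing φ with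
  | nil => simp
  | cons B L ih =>
    calc (List.foldl (fun acc B => FO.or acc B.fo) φ (B :: L)).size
        ≤ (FO.or φ B.fo).size + 8 * L.length := ih _
      _ ≤ φ.size + 8 * (B :: L).length := by
          have := nbc_fo_size (K := K) B
          simp only [FO.size, List.length_cons]
          omega

/-- Whether the basic concept `B` holds at `a` in `I_A`, directly in
terms of membership in `A`. -/
def BHolds (A : ABox Unit CN Unit) : NBC CN Unit → Prop
  | .atom c => GAtom.conc c () ∈ A
  | .expos _ => GAtom.role () () () ∈ A
  | .exinv _ => GAtom.role () () () ∈ A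

lemma fo_sem_iff (A : ABox Unit CN Unit) (B : NBC CN Unit) (v : ℕ → (IA A).Dom) :
    (NBC.fo B).sem (IA A) v ↔ BHolds A B := by
  cases B with
  | atom c => exact Iff.rfl
  | expos P => exact ⟨fun ⟨u, h⟩ => h, fun h => ⟨(), h⟩⟩
  | exinv P => exact ⟨fun ⟨u, h⟩ => h, fun h => ⟨(), h⟩⟩

end Aux
section TfAux

variable {n p ℓ : ℕ} (C : Circuit (Fin n) (Fin p) ℓ)

lemma memTf_XA (i : Fin (n + p + ℓ)) (b : Bool) :
    Ax.sub (.atom (.X i b)) (.bc (.atom (.A i.succ))) ∈ Tf C := by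
  refine List.mem_append_left _ (List.mem_append_left _ (List.mem_append_left _
    (List.mem_append_left _ (List.mem_append_left _ ?_))))
  exact List.mem_flatMap.2 ⟨i, List.mem_finRange i,
    List.mem_flatMap.2 ⟨b, by cases b <;> simp, by simp⟩⟩

lemma memTf_A0A (k : Fin (n + p + ℓ)) :
    Ax.disj (.atom (.A 0)) (.atom (.A k.succ)) ∈ Tf C := by
  refine List.mem_append_left _ (List.mem_append_left _ (List.mem_append_right _ ?_))
  exact List.mem_map.2 ⟨k, List.mem_finRange k, rfl⟩

lemma memTf_A0P :
    Ax.disj (.atom (.A 0)) (.exr (.pos ())) ∈ (Tf C : List _) := by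
  refine List.mem_append_left _ (List.mem_append_right _ ?_)
  exact List.mem_singleton_self _

lemma memTf_A0Z (i : Fin (n + p + ℓ + 1)) (j : Fin (n + 1 + 3 * ℓ))
    (h : ¬(i.val = 0 ∧ j.val < n)) :
    Ax.disj (.atom (.A 0)) (.atom (.Z i j)) ∈ Tf C := by
  refine List.mem_append_right _ ?_
  refine List.mem_flatMap.2 ⟨i, List.mem_finRange i,
    List.mem_flatMap.2 ⟨j, List.mem_finRange j, ?_⟩⟩
  rw [if_neg h]
  exact List.mem_singleton_self _

lemma tdb_A (k : Fin (n + p + ℓ)) :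
    TDisjBot (Tf C) (.atom (.A 0)) (.atom (.A k.succ)) :=
  fun I hT u h0 hB => hT _ (memTf_A0A C k) u h0 hB

lemma tdb_X (i : Fin (n + p + ℓ)) (b : Bool) :
    TDisjBot (Tf C) (.atom (.A 0)) (.atom (.X i b)) :=
  fun I hT u h0 hB => hT _ (memTf_A0A C i) u h0 (hT _ (memTf_XA C i b) u hB)

lemma tdb_Z (i : Fin (n + p + ℓ + 1)) (j : Fin (n + 1 + 3 * ℓ))
    (h : ¬(i.val = 0 ∧ j.val < n)) :
    TDisjBot (Tf C) (.atom (.A 0)) (.atom (.Z i j)) :=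
  fun I hT u h0 hB => hT _ (memTf_A0Z C i j h) u h0 hB

lemma tdb_P : TDisjBot (Tf C) (.atom (.A 0)) (.exr (.pos ())) :=
  fun I hT u h0 hB => hT _ (memTf_A0P C) u h0 hB

/-- The model in which every concept except `A₀` is universal, and `P` is
universal: it satisfies `T_f`, and any ABox not containing `A₀(a)`, but
refutes `q_f`. -/
def Istar (n p ℓ : ℕ) : Interp Unit (CName (n + p + ℓ) (n + 1 + 3 * ℓ)) Unit where
  Dom := Unit
  ne := ⟨()⟩
  ind := id
  conc := fun c _ => c ≠ .A 0
  role := fun _ _ _ => True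

lemma Istar_models : ∀ ax ∈ Tf C, ax.sem (Istar n p ℓ) := by
  intro ax hax
  simp only [Tf, List.mem_append] at hax
  rcases hax with ((((h | h) | h) | h) | h) | h
  · simp only [List.mem_flatMap, List.mem_finRange, true_and, List.mem_cons,
      List.mem_singleton, List.not_mem_nil, or_false] at h
    obtain ⟨i, b, hb, (rfl | rfl)⟩ := h
    · intro u _
      exact ⟨(), trivial, by simp [Istar, BCon.sem, Con.sem]⟩
    · intro u _
      simp [Istar, BCon.sem, Con.sem, Fin.succ_ne_zero]
  · simp only [List.mem_flatMap, List.mem_finRange, true_and] at h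
    obtain ⟨i, j, h⟩ := h
    rcases List.mem_append.1 h with h | h <;> [skip; skip] <;>
      (split_ifs at h with hc
       · rcases List.mem_singleton.1 h with rfl
         intro u _
         simp [Istar, BCon.sem, Con.sem]
       · simp at h)
  · simp only [List.mem_flatMap, List.mem_finRange, List.mem_map, true_and] at h
    obtain ⟨i, j, rfl⟩ := h
    intro u _
    exact ⟨(), trivial, by simp [Istar, BCon.sem, Con.sem]⟩
  · simp only [List.mem_map, List.mem_finRange, true_and] at h
    obtain ⟨i, rfl⟩ := h
    intro u h0
    exact absurd rfl h0
  · rcases List.mem_singleton.1 h with rfl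
    intro u h0
    exact absurd rfl h0
  · simp only [List.mem_flatMap, List.mem_finRange, true_and] at h
    obtain ⟨i, j, h⟩ := h
    split_ifs at h with hc
    · simp at h
    · rcases List.mem_singleton.1 h with rfl
      intro u h0
      exact absurd rfl h0

end TfAux
/-- Encoding of the nontrivial basic concepts of `Σ_f` into a finite type,
used to bound the length of the duplicate-free list `L`. -/
def nbcEnc {N d : ℕ} : NBC (CName N d) Unit →
    (Fin (N + 1) ⊕ Fin N × Bool ⊕ Fin (N + 1) × Fin d) ⊕ Bool
  | .atom (.A i) => .inl (.inl i)
  | .atom (.X i b) => .inl (.inr (.inl (i, b)))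
  | .atom (.Z i j) => .inl (.inr (.inr (i, j)))
  | .expos _ => .inr true
  | .exinv _ => .inr false

lemma nbcEnc_inj {N d : ℕ} : Function.Injective (nbcEnc (N := N) (d := d)) := by
  intro x y h
  cases x with
  | atom c =>
    cases y with
    | atom c' => cases c <;> cases c' <;> simp_all [nbcEnc]
    | expos u => cases c <;> simp [nbcEnc] at h
    | exinv u => cases c <;> simp [nbcEnc] at h
  | expos u =>
    cases y with
    | atom c' => cases c' <;> simp [nbcEnc] at h
    | expos u' => rfl
    | exinv u' => simp [nbcEnc] at h
  | exinv u =>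
    cases y with
    | atom c' => cases c' <;> simp [nbcEnc] at h
    | expos u' => simp [nbcEnc] at h
    | exinv u' => rfl

/-- Let `f` be a monotone Boolean function
nondeterministically computed by a circuit `C` with only `¬`- and `∧`-gates,
and let `T_f`, `q_f`, `A_α`, `Σ_f` be the associated construction (`Σ_f` has
the single constant `a`).  Suppose `q'` is a first-order sentence over `Σ_f`
such that, for every `α`, `(T_f, A_α) ⊨ q_f` iff `I_{A_α} ⊨ q'`.  Then
`q'' = ∃x [A₀(x) ∧ (q' ∨ ⋁_B B(x))]`, where `B` ranges over the basic
concepts of `Σ_f` with `A₀ ⊓ B ⊑_{T_f} ⊥` (collected, without repetitions,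
in a list `L`), is an FO-rewriting for `q_f` and `T_f` over `Σ_f`, and there
is an absolute constant `c` with `|q''| ≤ |q'| + c·|C|²`. -/
theorem statement9 :
    ∃ c : ℕ,
      ∀ (n p ℓ : ℕ) (C : Circuit (Fin n) (Fin p) ℓ)
        (f : (Fin n → Bool) → Bool),
        C.OnlyNotAnd → MonotoneFun f → NondetComputes C f →
        ∀ (q' : FO Unit (CName (n + p + ℓ) (n + 1 + 3 * ℓ)) Unit),
          q'.free = ∅ →
          (∀ α : Fin n → Bool,
            (Entails (Tf C) (Aalpha n p ℓ α) (qf n p ℓ) ↔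
              FO.holds (IA (Aalpha n p ℓ α)) q')) →
          ∀ L : List (NBC (CName (n + p + ℓ) (n + 1 + 3 * ℓ)) Unit),
            L.Nodup →
            (∀ B, B ∈ L ↔ TDisjBot (Tf C) (.atom (.A 0)) B.toBC) →
            IsFORewriting (Tf C) (qf n p ℓ)
              (FO.ex 0 (FO.and (FO.conc (.A 0) (.var 0))
                (L.foldl (fun acc B => FO.or acc B.fo) q'))) ∧
            (FO.ex 0 (FO.and (FO.conc (.A 0) (.var 0))
                (L.foldl (fun acc B => FO.or acc B.fo) q'))).size ≤
              q'.size + c * C.size ^ 2 := by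
    classical
  refine ⟨200, ?_⟩
  intro n p ℓ C f _ _ _ q' _ hq' L hLnd hL
  constructor
  · -- FO-rewriting
    intro A
    by_cases hA0 : GAtom.conc (.A 0) () ∈ A
    · by_cases hBad : ∃ B ∈ L, BHolds A B
      · -- inconsistent case: both sides hold
        constructor
        · intro _
          refine (holds_IA_iff _ _).2 ?_
          obtain ⟨B, hBL, hBh⟩ := hBad
          exact ⟨(), hA0,
            (foldl_or_sem _ _ _ _).2 (Or.inr ⟨B, hBL, (fo_sem_iff _ _ _).2 hBh⟩)⟩
        · intro _ I hT hIA'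
          exfalso
          obtain ⟨B, hBL, hBh⟩ := hBad
          refine (hL B).1 hBL I hT (I.ind ()) (hIA' _ hA0) ?_
          cases B with
          | atom c => exact hIA' _ hBh
          | expos P => exact ⟨I.ind (), hIA' _ hBh⟩
          | exinv P => exact ⟨I.ind (), hIA' _ hBh⟩
      · -- the regular case: A behaves like A_α
        set α : Fin n → Bool := fun j =>
          if GAtom.conc (.Z 0 ⟨j.val, Nat.lt_of_lt_of_le j.isLt (by omega)⟩) () ∈ A
            then true else false with hαdef
        have hαiff : ∀ (j : Fin n) (h : (j : ℕ) < n + 1 + 3 * ℓ),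
            α j = true ↔ GAtom.conc (.Z 0 ⟨j.val, h⟩) () ∈ A := by
          intro j h
          constructor
          · intro ht
            by_contra hm
            simp only [hαdef] at ht
            rw [if_neg hm] at ht
            exact Bool.false_ne_true ht
          · intro hm
            simp only [hαdef]
            rw [if_pos hm]
        have c1 : ∀ g, g ∈ A ↔ g ∈ Aalpha n p ℓ α := by
          intro g
          constructor
          · intro hg
            cases g with
            | role P u w =>
              exact absurd ⟨.expos (), (hL _).2 (tdb_P C), hg⟩ hBad
            | conc c u =>
              cases c with
              | A i =>
                by_cases hi : i = 0
                · subst hi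
                  exact List.mem_cons_self
                · obtain ⟨k, rfl⟩ := Fin.eq_succ_of_ne_zero hi
                  exact absurd ⟨.atom (.A k.succ), (hL _).2 (tdb_A C k), hg⟩ hBad
              | X i b =>
                exact absurd ⟨.atom (.X i b), (hL _).2 (tdb_X C i b), hg⟩ hBad
              | Z i j =>
                by_cases hij : i.val = 0 ∧ j.val < n
                · obtain ⟨hi, hj⟩ := hij
                  have hi0 : i = 0 := by
                    apply Fin.ext
                    simp [hi]
                  subst hi0
                  refine List.mem_cons_of_mem _ (List.mem_filterMap.2
                    ⟨⟨j.val, hj⟩, List.mem_finRange _, ?_⟩)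
                  have hα : α ⟨j.val, hj⟩ = true :=
                    (hαiff ⟨j.val, hj⟩ (Nat.lt_of_lt_of_le hj (by omega))).2 hg
                  rw [if_pos hα]
                · exact absurd ⟨.atom (.Z i j), (hL _).2 (tdb_Z C i j hij), hg⟩ hBad
          · intro hg
            rcases List.mem_cons.1 hg with rfl | hg
            · exact hA0
            · obtain ⟨j', -, hj'⟩ := List.mem_filterMap.1 hg
              by_cases hα : α j' = true
              · rw [if_pos hα] at hj'
                obtain rfl := Option.some.inj hj'
                exact (hαiff j' (Nat.lt_of_lt_of_le j'.isLt (by omega))).1 hα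
              · rw [if_neg hα] at hj'
                exact absurd hj' (by simp)
        have hEq : Entails (Tf C) A (qf n p ℓ) ↔
            Entails (Tf C) (Aalpha n p ℓ α) (qf n p ℓ) := by
          constructor <;> intro h I h1 h2
          · exact h I h1 fun g hg => h2 g ((c1 g).1 hg)
          · exact h I h1 fun g hg => h2 g ((c1 g).2 hg)
        have hIAeq : IA A = IA (Aalpha n p ℓ α) := by
          have hc : (fun (c : CName (n + p + ℓ) (n + 1 + 3 * ℓ)) (a : Unit) =>
                GAtom.conc c a ∈ A)
              = fun c a => GAtom.conc c a ∈ Aalpha n p ℓ α :=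
            funext fun c => funext fun a => propext (c1 _)
          have hr : (fun (P : Unit) (a b : Unit) => GAtom.role P a b ∈ A)
              = fun P a b => GAtom.role P a b ∈ Aalpha n p ℓ α :=
            funext fun P => funext fun a => funext fun b => propext (c1 _)
          unfold IA
          rw [hc, hr]
        rw [hEq, hq' α, ← hIAeq, holds_IA_iff, holds_IA_iff]
        constructor
        · intro h
          exact ⟨(), hA0,
            (foldl_or_sem _ _ _ _).2 (Or.inl ((sem_IA_val _ _ _ _).1 h))⟩
        · rintro ⟨u, -, hh⟩
          rcases (foldl_or_sem _ _ _ _).1 hh with h | ⟨B, hBL, hfo⟩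
          · exact (sem_IA_val _ _ _ _).1 h
          · exact absurd ⟨B, hBL, (fo_sem_iff _ _ _).1 hfo⟩ hBad
    · -- A₀(a) ∉ A : both sides fail
      constructor
      · intro hE
        exfalso
        have hA' : ∀ g ∈ A, GAtom.sem (Istar n p ℓ) g := by
          intro g hg
          cases g with
          | conc c u => exact fun hc => hA0 (hc ▸ hg)
          | role P u w => trivial
        obtain ⟨v, hv⟩ := hE _ (Istar_models C) hA'
        exact hv (CQAtom.conc (.A 0) (.var 0))
          (List.mem_append_left _ (List.mem_append_left _ (List.mem_singleton_self _))) rfl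
      · intro hq''
        exfalso
        obtain ⟨u, h0, -⟩ := (holds_IA_iff _ _).1 hq''
        exact hA0 h0
  · -- size bound
    have hsz : C.size = n + p + ℓ := by
      simp [Circuit.size, Nat.card_eq_fintype_card]
    have hl1 : 0 < ℓ := C.out.pos
    have h2 : L.length ≤ Fintype.card
        ((Fin (n + p + ℓ + 1) ⊕ Fin (n + p + ℓ) × Bool ⊕
          Fin (n + p + ℓ + 1) × Fin (n + 1 + 3 * ℓ)) ⊕ Bool) := by
      have h1 : (L.map nbcEnc).Nodup := hLnd.map nbcEnc_inj
      have h2 := h1.length_le_card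
      rwa [List.length_map] at h2
    have h3 : Fintype.card
        ((Fin (n + p + ℓ + 1) ⊕ Fin (n + p + ℓ) × Bool ⊕
          Fin (n + p + ℓ + 1) × Fin (n + 1 + 3 * ℓ)) ⊕ Bool)
        = (n + p + ℓ + 1) + ((n + p + ℓ) * 2 +
            (n + p + ℓ + 1) * (n + 1 + 3 * ℓ)) + 2 := by
      simp [Fintype.card_sum, Fintype.card_prod]
      try ring
    rw [h3] at h2
    have hfold := foldl_or_size (K := Unit) L q'
    have hq''sz : (FO.ex 0 (FO.and (FO.conc (.A 0) (.var 0))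
        (L.foldl (fun acc B => FO.or acc B.fo) q'))).size
        = 7 + (L.foldl (fun acc B => FO.or acc B.fo) q').size := by
      simp [FO.size]
      try ring
    rw [hq''sz, hsz]
    nlinarith [h2, hfold, hl1, sq_nonneg (n + p + ℓ)]

end QRew
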